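/- In the Ramond case with ψ(L_2) = 0 and ψ(L_1) ≠ 0, the (1|1)-dimensional SVir_0⁺-module A(ψ) has the odd line ℂu as a nontrivial proper submodule. -/

import Mathlib

noncomputable section

/-- The action of `L_n` on the Ramond `A(ψ) = ℂw ⊕ ℂu` (`w = (1,0)` even, `u = (0,1)` odd). -/
def aL (ψL : ℤ → ℂ) (n : ℤ) : Module.End ℂ (ℂ × ℂ) := ψL n • (LinearMap.id)

/-- The action of `G_r` (`r ≥ 1`) on the Ramond `A(ψ)`: `G_1·w = u`, `G_1·u = ψ(L_2)w`,
and for `r ≥ 2`: `G_r·w = 0`, `G_r·u = 2ψ(L_{r+1})w`. -/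
def bG (ψL : ℤ → ℂ) (r : ℤ) : Module.End ℂ (ℂ × ℂ) :=
  LinearMap.prod
    ((if r = 1 then ψL 2 else 2 * ψL (r + 1)) • LinearMap.snd ℂ ℂ ℂ)
    ((if r = 1 then (1 : ℂ) else 0) • LinearMap.fst ℂ ℂ ℂ)

/-- The odd line `ℂu`. -/
def oddLine : Submodule ℂ (ℂ × ℂ) := Submodule.prod ⊥ ⊤

/-!
The `L_n` act by scalars, and the only part of `G_r` that leaves `ℂu` is `u ↦ c ψ(L_{r+1}) w`
(with `c = 1` for `r = 1` and `c = 2` otherwise).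
The relation `(m - 1) ψ(L_{m+1}) = 0` coming from `[L_m, L_1]` kills `ψ(L_k)` for `k ≥ 3`, and
`ψ(L_2) = 0` is assumed, so `ψ(L_{r+1}) = 0` for every `r ≥ 1`.
-/

theorem mem_oddLine_iff {v : ℂ × ℂ} : v ∈ oddLine ↔ v.1 = 0 := by
  simp [oddLine, Submodule.mem_prod]

theorem oddLine_ne_bot : oddLine ≠ ⊥ := fun h => by
  have hu : ((0 : ℂ), (1 : ℂ)) ∈ oddLine := mem_oddLine_iff.2 rfl
  simp [h] at hu

theorem oddLine_ne_top : oddLine ≠ ⊤ := fun h => by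
  have hw : ((1 : ℂ), (0 : ℂ)) ∈ oddLine := h ▸ Submodule.mem_top
  simp [mem_oddLine_iff] at hw

theorem aL_apply_mem_oddLine (ψL : ℤ → ℂ) (n : ℤ) {v : ℂ × ℂ} (hv : v ∈ oddLine) :
    aL ψL n v ∈ oddLine :=
  oddLine.smul_mem _ hv

theorem bG_apply_mem_oddLine {ψL : ℤ → ℂ} {r : ℤ} (hψ : ψL (r + 1) = 0) (v : ℂ × ℂ) :
    bG ψL r v ∈ oddLine := by
  rw [mem_oddLine_iff]
  by_cases hr : r = 1
  · subst hr
    norm_num at hψ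
    simp [bG, hψ]
  · simp [bG, hr, hψ]

theorem apply_eq_zero_of_three_le {ψL : ℤ → ℂ}
    (hLL : ∀ m n : ℤ, 1 ≤ m → 1 ≤ n → ((m : ℂ) - (n : ℂ)) * ψL (m + n) = 0)
    {k : ℤ} (hk : 3 ≤ k) : ψL k = 0 := by
  have hrel := hLL (k - 1) 1 (by omega) le_rfl
  have hcoeff : ((k - 1 - 1 : ℤ) : ℂ) ≠ 0 := Int.cast_ne_zero.2 (by omega)
  push_cast at hrel hcoeff
  simpa [hcoeff] using hrel

theorem whittaker_stmt9_general (ψL : ℤ → ℂ)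
    (hLL : ∀ m n : ℤ, 1 ≤ m → 1 ≤ n → ((m : ℂ) - (n : ℂ)) * ψL (m + n) = 0)
    (h2 : ψL 2 = 0) :
    (∀ n : ℤ, 1 ≤ n → ∀ v ∈ oddLine, aL ψL n v ∈ oddLine) ∧
    (∀ r : ℤ, 1 ≤ r → ∀ v ∈ oddLine, bG ψL r v ∈ oddLine) ∧
    oddLine ≠ ⊥ ∧ oddLine ≠ ⊤ := by
  refine ⟨fun n _ v hv => aL_apply_mem_oddLine ψL n hv, fun r hr v _ => ?_, oddLine_ne_bot,
    oddLine_ne_top⟩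
  have hψ : ψL (r + 1) = 0 := by
    rcases hr.eq_or_lt with rfl | hr
    · exact h2
    · exact apply_eq_zero_of_three_le hLL (by omega)
  exact bG_apply_mem_oddLine hψ v

/-- In the Ramond case, if `ψ(L_2) = 0` and `ψ(L_1) ≠ 0`, the
`(1|1)`-dimensional `SVir_0⁺`-module `A(ψ)` has the odd line `ℂu` as a nontrivial proper
submodule: `ℂu` is invariant under all `L_n` (`n ≥ 1`) and `G_r` (`r ≥ 1`), and is neither
`0` nor the whole module. -/
theorem whittaker_stmt9 (ψL ψG : ℤ → ℂ)
    (hLL : ∀ m n : ℤ, 1 ≤ m → 1 ≤ n → ((m : ℂ) - (n : ℂ)) * ψL (m + n) = 0)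
    (hLG : ∀ m r : ℤ, 1 ≤ m → 2 ≤ r → ((m : ℂ)/2 - (r : ℂ)) * ψG (m + r) = 0)
    (hGG : ∀ r s : ℤ, 2 ≤ r → 2 ≤ s → (2 : ℂ) * ψL (r + s) = 0)
    (hparity : ∀ r : ℤ, 2 ≤ r → ψG r = 0)
    (h2 : ψL 2 = 0) (h1 : ψL 1 ≠ 0) :
    (∀ n : ℤ, 1 ≤ n → ∀ v ∈ oddLine, aL ψL n v ∈ oddLine) ∧
    (∀ r : ℤ, 1 ≤ r → ∀ v ∈ oddLine, bG ψL r v ∈ oddLine) ∧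
    oddLine ≠ ⊥ ∧ oddLine ≠ ⊤ :=
  whittaker_stmt9_general ψL hLL h2
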